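/- Let L and i be non-negative integers, and let h_{L,i}(y,q) = ∑_π (1−y)^{ν⁺_d(π)} · q^{|π|}, where the sum ranges over all sequences π of exactly i non-negative integer parts, each at most L, arranged in non-increasing order, |π| is the sum of the parts, and ν⁺_d(π) is the number of different positive values occurring among the parts of π. Then h_{L,i}(y,q) = ∑_{j ≥ 0} q^{j(j+1)/2}·(−y)^j·[L+i−j choose i]_q·[i choose j]_q, as an identity of polynomials in y and q. -/

import Mathlib

/-!
Statement 10 (Alladi–Berkovich lemma): For non-negative integers `L` and `i`,
`h_{L,i}(y,q) = ∑_π (1−y)^{ν⁺_d(π)} q^{|π|}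
             = ∑_{j ≥ 0} q^{j(j+1)/2} (−y)^j [L+i−j choose i]_q [i choose j]_q`,
where the sum ranges over all non-increasing sequences of exactly `i` parts from
`{0,…,L}` (equivalently, multisets of size `i` with entries at most `L`), `|π|` is the sum
of the parts and `ν⁺_d(π)` is the number of distinct positive values among the parts.
The sum over `j` is finite since `[i choose j]_q = 0` for `j > i`.  The identity is stated
in `ℚ⟦y,q⟧` (both sides are polynomials in `y` and `q`).
-/

/-- The variable `y` in `ℚ⟦y,q⟧`. -/
noncomputable def yv : MvPowerSeries (Fin 2) ℚ := MvPowerSeries.X 0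

/-- The variable `q` in `ℚ⟦y,q⟧`. -/
noncomputable def qv : MvPowerSeries (Fin 2) ℚ := MvPowerSeries.X 1

/-- `(q; q)_N = ∏_{k=0}^{N−1} (1 − q^{k+1})` in `ℚ⟦y,q⟧`. -/
noncomputable def qPoch (N : ℕ) : MvPowerSeries (Fin 2) ℚ :=
  ∏ k ∈ Finset.range N, (1 - qv ^ (k + 1))

/-- The Gaussian binomial coefficient `[a choose b]_q` in `ℚ⟦y,q⟧`, defined as
`(q;q)_a / ((q;q)_b (q;q)_{a−b})` for `a ≥ b ≥ 0` and `0` otherwise. -/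
noncomputable def gauss (a b : ℕ) : MvPowerSeries (Fin 2) ℚ :=
  if b ≤ a then qPoch a * (qPoch b * qPoch (a - b))⁻¹ else 0


/-!
Both sides satisfy `h_{L+1,i+1} = h_{L,i+1} + q^{L+1} h_{L+1,i} − y q^{L+1} h_{L,i}` with
`h_{L,0} = h_{0,i} = 1`. For the partitions, split off those having `L + 1` as a part and remove
one copy of it: this costs `q^{L+1}`, and a further factor `1 − y` when `L + 1` was not a part
of what remains. For the Gaussian side the recurrence holds termwise by the two `q`-Pascal rules.
-/

open Finset

lemma qPoch_zero : qPoch 0 = 1 := prod_range_zero _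

lemma qPoch_succ (n : ℕ) : qPoch (n + 1) = qPoch n * (1 - qv ^ (n + 1)) :=
  prod_range_succ _ _

lemma constantCoeff_qPoch (n : ℕ) : MvPowerSeries.constantCoeff (qPoch n) = 1 := by
  simp [qPoch, qv, map_prod]

lemma isUnit_qPoch (n : ℕ) : IsUnit (qPoch n) := by
  simp [MvPowerSeries.isUnit_iff_constantCoeff, constantCoeff_qPoch]

lemma gauss_add_mul_qPoch (b c : ℕ) :
    gauss (b + c) b * (qPoch b * qPoch c) = qPoch (b + c) := by
  rw [gauss, if_pos (Nat.le_add_right b c), Nat.add_sub_cancel_left, mul_assoc,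
    MvPowerSeries.inv_mul_cancel _ (by simp [constantCoeff_qPoch]), mul_one]

lemma eq_gauss_of_mul_qPoch {x : MvPowerSeries (Fin 2) ℚ} {b c : ℕ}
    (h : x * (qPoch b * qPoch c) = qPoch (b + c)) : x = gauss (b + c) b :=
  ((isUnit_qPoch b).mul (isUnit_qPoch c)).mul_right_cancel (h.trans (gauss_add_mul_qPoch b c).symm)

lemma gauss_of_lt {a b : ℕ} (h : a < b) : gauss a b = 0 :=
  if_neg (not_le.mpr h)

lemma gauss_zero_right (a : ℕ) : gauss a 0 = 1 := by
  simpa using (eq_gauss_of_mul_qPoch (b := 0) (c := a) (x := 1) (by simp [qPoch_zero])).symm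

lemma gauss_self (a : ℕ) : gauss a a = 1 := by
  simpa using (eq_gauss_of_mul_qPoch (b := a) (c := 0) (x := 1) (by simp [qPoch_zero])).symm

lemma gauss_add_succ_mul_qPoch (b c : ℕ) :
    gauss (b + c + 1) (b + 1) * (qPoch (b + 1) * qPoch c) = qPoch (b + c + 1) := by
  rw [show b + c + 1 = b + 1 + c by omega]
  exact gauss_add_mul_qPoch (b + 1) c

lemma gauss_succ_succ (n k : ℕ) :
    gauss (n + 1) (k + 1) = qv ^ (k + 1) * gauss n (k + 1) + gauss n k := by
  rcases lt_or_ge n k with hnk | hkn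
  · simp [gauss_of_lt, hnk, Nat.lt_succ_of_lt hnk]
  obtain ⟨_ | c, rfl⟩ := Nat.exists_eq_add_of_le hkn
  · simp [gauss_self, gauss_of_lt]
  have h₁ := gauss_add_succ_mul_qPoch k c
  have h₂ := gauss_add_mul_qPoch k (c + 1)
  have key : (qv ^ (k + 1) * gauss (k + c + 1) (k + 1) + gauss (k + c + 1) k) *
      (qPoch (k + 1) * qPoch (c + 1)) = qPoch (k + 1 + (c + 1)) := by
    rw [show k + 1 + (c + 1) = k + c + 1 + 1 by omega, qPoch_succ (k + c + 1)]
    rw [← add_assoc, qPoch_succ k, qPoch_succ c] at *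
    linear_combination (qv ^ (k + 1) * (1 - qv ^ (c + 1))) * h₁ + (1 - qv ^ (k + 1)) * h₂
  rw [← add_assoc, eq_gauss_of_mul_qPoch key]
  congr 1
  omega

lemma gauss_add_succ_succ (b c : ℕ) :
    gauss (b + c + 1) (b + 1) = gauss (b + c) (b + 1) + qv ^ c * gauss (b + c) b := by
  rcases c with _ | c
  · simp [gauss_self, gauss_of_lt]
  have h₁ := gauss_add_succ_mul_qPoch b c
  have h₂ := gauss_add_mul_qPoch b (c + 1)
  have key : (gauss (b + c + 1) (b + 1) + qv ^ (c + 1) * gauss (b + c + 1) b) *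
      (qPoch (b + 1) * qPoch (c + 1)) = qPoch (b + 1 + (c + 1)) := by
    rw [show b + 1 + (c + 1) = b + c + 1 + 1 by omega, qPoch_succ (b + c + 1)]
    rw [← add_assoc, qPoch_succ b, qPoch_succ c] at *
    linear_combination (1 - qv ^ (c + 1)) * h₁ + (qv ^ (c + 1) * (1 - qv ^ (b + 1))) * h₂
  rw [← add_assoc, eq_gauss_of_mul_qPoch key]
  congr 1
  omega

noncomputable def abTerm (L i j : ℕ) : MvPowerSeries (Fin 2) ℚ :=
  qv ^ (j * (j + 1) / 2) * (-yv) ^ j * gauss (L + i - j) i * gauss i j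

noncomputable def gaussianSum (L i : ℕ) : MvPowerSeries (Fin 2) ℚ :=
  ∑ j ∈ range (i + 1), abTerm L i j

lemma abTerm_of_lt {L i j : ℕ} (h : i < j) : abTerm L i j = 0 := by
  rw [abTerm, gauss_of_lt h, mul_zero]

lemma abTerm_of_lt_left {L i j : ℕ} (h : L < j) : abTerm L i j = 0 := by
  rcases Nat.eq_zero_or_pos i with rfl | hi
  · exact abTerm_of_lt (by omega)
  · rw [abTerm, gauss_of_lt (a := L + i - j) (by omega), mul_zero, zero_mul]

lemma abTerm_succ_succ_zero (L i : ℕ) :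
    abTerm (L + 1) (i + 1) 0 = abTerm L (i + 1) 0 + qv ^ (L + 1) * abTerm (L + 1) i 0 := by
  simp only [abTerm, Nat.sub_zero, gauss_zero_right]
  rw [show L + 1 + (i + 1) = i + (L + 1) + 1 by omega, show L + (i + 1) = i + (L + 1) by omega,
    show L + 1 + i = i + (L + 1) by omega, gauss_add_succ_succ]
  ring

lemma abTerm_succ_succ_succ (L i k : ℕ) :
    abTerm (L + 1) (i + 1) (k + 1)
      = abTerm L (i + 1) (k + 1) + qv ^ (L + 1) * abTerm (L + 1) i (k + 1)
        - yv * qv ^ (L + 1) * abTerm L i k := by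
  rcases lt_or_ge L k with hLk | hkL
  · rw [abTerm_of_lt_left (by omega), abTerm_of_lt_left (by omega),
      abTerm_of_lt_left (by omega), abTerm_of_lt_left hLk]
    ring
  obtain ⟨m, rfl⟩ := Nat.exists_eq_add_of_le hkL
  have htri : (k + 1) * (k + 1 + 1) / 2 = k * (k + 1) / 2 + (k + 1) := by
    rw [show (k + 1) * (k + 1 + 1) = k * (k + 1) + (k + 1) * 2 by ring,
      Nat.add_mul_div_right _ _ two_pos]
  simp only [abTerm]
  rw [show k + m + 1 + (i + 1) - (k + 1) = i + m + 1 by omega,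
    show k + m + (i + 1) - (k + 1) = i + m by omega,
    show k + m + 1 + i - (k + 1) = i + m by omega, show k + m + i - k = i + m by omega,
    gauss_add_succ_succ, gauss_succ_succ, htri]
  ring

lemma gaussianSum_zero_right (L : ℕ) : gaussianSum L 0 = 1 := by
  simp [gaussianSum, abTerm, gauss_zero_right]

lemma gaussianSum_zero_left (i : ℕ) : gaussianSum 0 i = 1 := by
  rw [gaussianSum, sum_eq_single 0 (fun j _ hj => abTerm_of_lt_left (Nat.pos_of_ne_zero hj))
    (by simp)]
  simp [abTerm, gauss_zero_right, gauss_self]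

lemma gaussianSum_succ_succ (L i : ℕ) :
    gaussianSum (L + 1) (i + 1)
      = gaussianSum L (i + 1) + qv ^ (L + 1) * gaussianSum (L + 1) i
        - yv * qv ^ (L + 1) * gaussianSum L i := by
  have hext : gaussianSum (L + 1) i = ∑ j ∈ range (i + 1 + 1), abTerm (L + 1) i j := by
    rw [sum_range_succ, abTerm_of_lt (Nat.lt_succ_self i), add_zero, gaussianSum]
  rw [hext, gaussianSum, gaussianSum, gaussianSum, sum_range_succ' _ (i + 1),
    sum_range_succ' _ (i + 1), sum_range_succ' (abTerm (L + 1) i)]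
  simp only [abTerm_succ_succ_succ, abTerm_succ_succ_zero, sum_add_distrib, sum_sub_distrib,
    ← mul_sum]
  ring

section Sym

variable {α : Type*} [DecidableEq α] {a : α} {s : Finset α}

lemma sym_insert_filter_notMem (ha : a ∉ s) (n : ℕ) :
    ((insert a s).sym n).filter (fun x => a ∉ x) = s.sym n := by
  ext x
  simp only [mem_filter, mem_sym_iff, mem_insert]
  exact ⟨fun ⟨hx, hax⟩ b hb => (hx b hb).resolve_left (by rintro rfl; exact hax hb),
    fun hx => ⟨fun b hb => Or.inr (hx b hb), fun hax => ha (hx a hax)⟩⟩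

lemma sum_sym_succ_insert {M : Type*} [AddCommMonoid M] (ha : a ∉ s) (n : ℕ)
    (f : Sym α (n + 1) → M) :
    ∑ x ∈ (insert a s).sym (n + 1), f x
      = ∑ x ∈ s.sym (n + 1), f x + ∑ t ∈ (insert a s).sym n, f (a ::ₛ t) := by
  rw [← sum_filter_not_add_sum_filter _ (fun x => a ∈ x), sym_insert_filter_notMem ha]
  congr 1
  refine sum_bij' (fun x hx => x.erase a (mem_filter.mp hx).2) (fun t _ => a ::ₛ t)
    (fun x hx => ?_) (fun t ht => ?_) (fun x hx => Sym.cons_erase _)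
    (fun t _ => Sym.erase_cons_head t a) (fun x hx => by rw [Sym.cons_erase])
  · rw [mem_filter, mem_sym_iff] at hx
    exact mem_sym_iff.mpr fun b hb => hx.1 b (Multiset.mem_of_mem_erase hb)
  · rw [mem_sym_iff] at ht
    refine mem_filter.mpr ⟨mem_sym_iff.mpr fun b hb => ?_, Sym.mem_cons_self a t⟩
    rcases Sym.mem_cons.mp hb with rfl | hb
    exacts [mem_insert_self b s, ht b hb]

end Sym

noncomputable def abWeight (m : Multiset ℕ) : MvPowerSeries (Fin 2) ℚ :=
  (1 - yv) ^ ((m.toFinset.filter (fun x => 0 < x)).card) * qv ^ m.sum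

noncomputable def partitionSum (L i : ℕ) : MvPowerSeries (Fin 2) ℚ :=
  ∑ s ∈ (range (L + 1)).sym i, abWeight s

lemma abWeight_cons {a : ℕ} (ha : 0 < a) (t : Multiset ℕ) :
    abWeight (a ::ₘ t)
      = qv ^ a * abWeight t - yv * qv ^ a * (if a ∉ t then abWeight t else 0) := by
  rw [abWeight, abWeight, Multiset.sum_cons, pow_add, Multiset.toFinset_cons, filter_insert,
    if_pos ha]
  split_ifs with hat
  · rw [insert_eq_of_mem (by simpa [ha] using hat)]
    ring
  · rw [card_insert_of_notMem (by simp [hat]), pow_succ]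
    ring

lemma partitionSum_zero_right (L : ℕ) : partitionSum L 0 = 1 := by
  rw [partitionSum, sym_zero, sum_singleton]
  exact (by simp [abWeight] : abWeight 0 = 1)

lemma partitionSum_zero_left (i : ℕ) : partitionSum 0 i = 1 := by
  have hpos : (Multiset.replicate i 0).toFinset.filter (fun x => 0 < x) = ∅ :=
    filter_eq_empty_iff.mpr fun x hx => by
      simp [Multiset.eq_of_mem_replicate (Multiset.mem_toFinset.mp hx)]
  simp only [partitionSum, zero_add, range_one, sym_singleton, sum_singleton, abWeight,
    Sym.coe_replicate, hpos, Multiset.sum_replicate]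
  simp

lemma partitionSum_succ_succ (L i : ℕ) :
    partitionSum (L + 1) (i + 1)
      = partitionSum L (i + 1) + qv ^ (L + 1) * partitionSum (L + 1) i
        - yv * qv ^ (L + 1) * partitionSum L i := by
  have hL : L + 1 ∉ range (L + 1) := by simp
  have hfilter := sym_insert_filter_notMem hL i
  rw [← range_add_one] at hfilter
  rw [partitionSum, range_add_one, sum_sym_succ_insert hL, ← range_add_one]
  simp only [Sym.coe_cons, abWeight_cons (by omega : 0 < L + 1), Sym.mem_coe, sum_sub_distrib,
    ← mul_sum]
  rw [← sum_filter, hfilter, add_sub_assoc]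
  rfl

theorem alladi_berkovich (L i : ℕ) :
    ∑ s ∈ (Finset.range (L + 1)).sym i,
        (1 - yv) ^ (((s : Multiset ℕ).toFinset.filter (fun x => 0 < x)).card) *
          qv ^ ((s : Multiset ℕ).sum)
      = ∑ j ∈ Finset.range (i + 1),
          qv ^ (j * (j + 1) / 2) * (-yv) ^ j * gauss (L + i - j) i * gauss i j := by
  change partitionSum L i = gaussianSum L i
  induction L generalizing i with
  | zero => rw [partitionSum_zero_left, gaussianSum_zero_left]
  | succ L ihL =>
    induction i with
    | zero => rw [partitionSum_zero_right, gaussianSum_zero_right]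
    | succ i ihi => rw [partitionSum_succ_succ, gaussianSum_succ_succ, ihL, ihL, ihi]
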